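/- Let p > 3 be prime and let C be a finite nonempty set of nonzero Markoff triples mod p that is closed under all three Vieta involutions. Then p divides |C|. -/

import Mathlib

def Markoff (p : ℕ) (x : ZMod p × ZMod p × ZMod p) : Prop :=
  x.1^2 + x.2.1^2 + x.2.2^2 = 3 * x.1 * x.2.1 * x.2.2

def vieta1 (p : ℕ) (x : ZMod p × ZMod p × ZMod p) : ZMod p × ZMod p × ZMod p :=
  (3 * x.2.1 * x.2.2 - x.1, x.2.1, x.2.2)

def vieta2 (p : ℕ) (x : ZMod p × ZMod p × ZMod p) : ZMod p × ZMod p × ZMod p :=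
  (x.1, 3 * x.1 * x.2.2 - x.2.1, x.2.2)

def vieta3 (p : ℕ) (x : ZMod p × ZMod p × ZMod p) : ZMod p × ZMod p × ZMod p :=
  (x.1, x.2.1, 3 * x.1 * x.2.1 - x.2.2)

def y1 (p : ℕ) [Fact p.Prime] (x : ZMod p × ZMod p × ZMod p) : ZMod p :=
  if x.1 * x.2.1 * x.2.2 ≠ 0 then x.1 / (3 * x.2.1 * x.2.2)
  else if x.1 = 0 then 0 else 1/2

def y2 (p : ℕ) [Fact p.Prime] (x : ZMod p × ZMod p × ZMod p) : ZMod p :=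
  if x.1 * x.2.1 * x.2.2 ≠ 0 then x.2.1 / (3 * x.1 * x.2.2)
  else if x.2.1 = 0 then 0 else 1/2

def y3 (p : ℕ) [Fact p.Prime] (x : ZMod p × ZMod p × ZMod p) : ZMod p :=
  if x.1 * x.2.1 * x.2.2 ≠ 0 then x.2.2 / (3 * x.1 * x.2.1)
  else if x.2.2 = 0 then 0 else 1/2


/-!
On a nonzero Markoff triple with `x₁x₂x₃ ≠ 0` the weight `yᵢ = xᵢ / (3xⱼxₖ) = xᵢ² / (3x₁x₂x₃)`
satisfies `y₁ + y₂ + y₃ = 1` by the Markoff equation, and since the `i`-th Vieta move replaces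
`xᵢ` by `xᵢ'` with `xᵢ + xᵢ' = 3xⱼxₖ`, it sends `yᵢ` to `1 - yᵢ`. When a coordinate vanishes
(at most one can), the values `0` and `1/2` keep both identities. Summing over `C`, each
involution gives `2 ∑ yᵢ = |C|`, so `2|C| = 2 ∑ (y₁ + y₂ + y₃) = 3|C|` in `ZMod p`.
-/

theorem Finset.two_mul_sum_eq_card_of_involutive {α R : Type*} [CommRing R] {C : Finset α}
    {σ : α → α} (hσ : Function.Involutive σ) (hC : ∀ x ∈ C, σ x ∈ C) {f : α → R}
    (hf : ∀ x ∈ C, f (σ x) = 1 - f x) : 2 * ∑ x ∈ C, f x = C.card := by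
  have hperm : ∑ x ∈ C, f (σ x) = ∑ x ∈ C, f x :=
    Finset.sum_nbij' σ σ hC hC (fun x _ => hσ x) (fun x _ => hσ x) (fun _ _ => rfl)
  rw [Finset.sum_congr rfl hf, Finset.sum_sub_distrib, Finset.sum_const, nsmul_one] at hperm
  linear_combination -hperm

lemma ZMod.natCast_ne_zero_of_pos_of_lt {p n : ℕ} (hn : 0 < n) (hnp : n < p) :
    (n : ZMod p) ≠ 0 := by
  rw [Ne, ZMod.natCast_eq_zero_iff]
  exact Nat.not_dvd_of_pos_of_lt hn hnp

section Markoff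

variable {p : ℕ}

lemma two_ne_zero_of_three_lt (hp : 3 < p) : (2 : ZMod p) ≠ 0 := by
  exact_mod_cast ZMod.natCast_ne_zero_of_pos_of_lt (n := 2) two_pos (by omega)

lemma three_ne_zero_of_three_lt (hp : 3 < p) : (3 : ZMod p) ≠ 0 := by
  exact_mod_cast ZMod.natCast_ne_zero_of_pos_of_lt (n := 3) three_pos hp

lemma vieta1_involutive : Function.Involutive (vieta1 p) := fun _ => by simp [vieta1]

lemma vieta2_involutive : Function.Involutive (vieta2 p) := fun _ => by simp [vieta2]

lemma vieta3_involutive : Function.Involutive (vieta3 p) := fun _ => by simp [vieta3]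

lemma Markoff.swap {a b c : ZMod p} (h : Markoff p (a, b, c)) : Markoff p (b, a, c) := by
  unfold Markoff at *; linear_combination h

lemma Markoff.rotate {a b c : ZMod p} (h : Markoff p (a, b, c)) : Markoff p (c, a, b) := by
  unfold Markoff at *; linear_combination h

variable [Fact p.Prime]

lemma Markoff.eq_zero_of_eq_zero_of_eq_zero {a b c : ZMod p}
    (h : Markoff p (a, b, c)) (ha : a = 0) (hb : b = 0) : c = 0 := by
  unfold Markoff at h
  subst ha hb
  exact pow_eq_zero_iff two_ne_zero |>.mp (by linear_combination h)

lemma Markoff.not_two_eq_zero {a b c : ZMod p} (h : Markoff p (a, b, c))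
    (hnz : (a, b, c) ≠ (0, 0, 0)) :
    ¬(a = 0 ∧ b = 0) ∧ ¬(b = 0 ∧ c = 0) ∧ ¬(c = 0 ∧ a = 0) := by
  refine ⟨fun ⟨ha, hb⟩ => hnz ?_, fun ⟨hb, hc⟩ => hnz ?_, fun ⟨hc, ha⟩ => hnz ?_⟩
  · simp [ha, hb, h.eq_zero_of_eq_zero_of_eq_zero ha hb]
  · simp [hb, hc, h.rotate.rotate.eq_zero_of_eq_zero_of_eq_zero hb hc]
  · simp [hc, ha, h.rotate.eq_zero_of_eq_zero_of_eq_zero hc ha]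

lemma y2_eq_y1 (a b c : ZMod p) : y2 p (a, b, c) = y1 p (b, a, c) := by
  simp only [y1, y2, mul_comm b a]

lemma y3_eq_y1 (a b c : ZMod p) : y3 p (a, b, c) = y1 p (c, a, b) := by
  simp only [y1, y3, mul_comm c, mul_assoc]

lemma y1_vieta1 (hp : 3 < p) {x : ZMod p × ZMod p × ZMod p} (hM : Markoff p x)
    (hnz : x ≠ (0, 0, 0)) : y1 p (vieta1 p x) = 1 - y1 p x := by
  obtain ⟨a, b, c⟩ := x
  have h2 := two_ne_zero_of_three_lt hp
  have h3 := three_ne_zero_of_three_lt hp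
  by_cases ha : a = 0
  · obtain ⟨hab, -, hca⟩ := hM.not_two_eq_zero hnz
    have hb : b ≠ 0 := fun hb => hab ⟨ha, hb⟩
    have hc : c ≠ 0 := fun hc => hca ⟨hc, ha⟩
    simp [vieta1, y1, ha, hb, hc, h3]
  by_cases hbc : b * c = 0
  · have : NeZero (2 : ZMod p) := ⟨h2⟩
    simp only [vieta1, y1, mul_assoc, hbc, mul_zero, zero_sub, neg_eq_zero, ha, ne_eq,
      not_true_eq_false, if_false, sub_half]
  obtain ⟨hb, hc⟩ := mul_ne_zero_iff.mp hbc
  by_cases ha' : 3 * b * c - a = 0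
  · rw [sub_eq_zero] at ha'
    simp [vieta1, y1, ha, hb, hc, ha']
  · simp only [y1, vieta1, ne_eq, mul_eq_zero, ha', ha, hb, hc, or_self, not_false_eq_true,
      if_true]
    field_simp

lemma y2_vieta2 (hp : 3 < p) {x : ZMod p × ZMod p × ZMod p} (hM : Markoff p x)
    (hnz : x ≠ (0, 0, 0)) : y2 p (vieta2 p x) = 1 - y2 p x := by
  obtain ⟨a, b, c⟩ := x
  rw [vieta2, y2_eq_y1, y2_eq_y1]
  exact y1_vieta1 hp hM.swap (by simp only [ne_eq, Prod.mk.injEq] at hnz ⊢; tauto)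

lemma y3_vieta3 (hp : 3 < p) {x : ZMod p × ZMod p × ZMod p} (hM : Markoff p x)
    (hnz : x ≠ (0, 0, 0)) : y3 p (vieta3 p x) = 1 - y3 p x := by
  obtain ⟨a, b, c⟩ := x
  rw [vieta3, y3_eq_y1, y3_eq_y1]
  exact y1_vieta1 hp hM.rotate (by simp only [ne_eq, Prod.mk.injEq] at hnz ⊢; tauto)

lemma y1_add_y2_add_y3 (hp : 3 < p) {x : ZMod p × ZMod p × ZMod p} (hM : Markoff p x)
    (hnz : x ≠ (0, 0, 0)) : y1 p x + y2 p x + y3 p x = 1 := by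
  obtain ⟨a, b, c⟩ := x
  have h2 := two_ne_zero_of_three_lt hp
  by_cases habc : a * b * c = 0
  · obtain ⟨hab, hbc, hca⟩ := hM.not_two_eq_zero hnz
    obtain (ha | hb) | hc := mul_eq_zero.mp habc |>.imp_left mul_eq_zero.mp <;>
      simp_all [y1, y2, y3, ← two_mul]
  · have h3 := three_ne_zero_of_three_lt hp
    obtain ⟨⟨ha, hb⟩, hc⟩ := mul_ne_zero_iff.mp habc |>.imp_left mul_ne_zero_iff.mp
    simp only [y1, y2, y3, ne_eq, habc, not_false_eq_true, if_true]
    field_simp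
    unfold Markoff at hM
    linear_combination hM

end Markoff

theorem stmt8_general (p : ℕ) [Fact p.Prime] (hp : 3 < p)
    (C : Finset (ZMod p × ZMod p × ZMod p))
    (hM : ∀ x ∈ C, Markoff p x) (hnz : ∀ x ∈ C, x ≠ (0, 0, 0))
    (h1 : ∀ x ∈ C, vieta1 p x ∈ C) (h2 : ∀ x ∈ C, vieta2 p x ∈ C)
    (h3 : ∀ x ∈ C, vieta3 p x ∈ C) :
    p ∣ C.card := by
  have e1 := Finset.two_mul_sum_eq_card_of_involutive vieta1_involutive h1
    fun x hx => y1_vieta1 hp (hM x hx) (hnz x hx)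
  have e2 := Finset.two_mul_sum_eq_card_of_involutive vieta2_involutive h2
    fun x hx => y2_vieta2 hp (hM x hx) (hnz x hx)
  have e3 := Finset.two_mul_sum_eq_card_of_involutive vieta3_involutive h3
    fun x hx => y3_vieta3 hp (hM x hx) (hnz x hx)
  have hsum : ∑ x ∈ C, y1 p x + ∑ x ∈ C, y2 p x + ∑ x ∈ C, y3 p x = C.card := by
    rw [← Finset.sum_add_distrib, ← Finset.sum_add_distrib,
      Finset.sum_congr rfl fun x hx => y1_add_y2_add_y3 hp (hM x hx) (hnz x hx)]
    simp
  rw [← ZMod.natCast_eq_zero_iff]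
  linear_combination 2 * hsum - e1 - e2 - e3

theorem stmt8 (p : ℕ) [Fact p.Prime] (hp : 3 < p)
    (C : Finset (ZMod p × ZMod p × ZMod p)) (hne : C.Nonempty)
    (hM : ∀ x ∈ C, Markoff p x) (hnz : ∀ x ∈ C, x ≠ (0, 0, 0))
    (h1 : ∀ x ∈ C, vieta1 p x ∈ C) (h2 : ∀ x ∈ C, vieta2 p x ∈ C)
    (h3 : ∀ x ∈ C, vieta3 p x ∈ C) :
    p ∣ C.card :=
  stmt8_general p hp C hM hnz h1 h2 h3
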